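/- arXiv:1911.06715 — 2 statements merged into one kernel-verified Lean document; each statement's English description precedes it below -/
import Mathlib

section
/- There exist constants η₀ > 0 such that for all real s, (sinh(√(2|s|)) + sin(√(2|s|)))/(2√2·√|s|·cosh(√(2|s|))) ≥ η₀/(1 + |s|^(1/2)), where the left-hand side is interpreted via its continuous extension (limit value 1) at s = 0. -/
theorem stmt2 :
    ∃ η₀ > (0 : ℝ), ∀ s : ℝ,
      (if s = 0 then (1 : ℝ) else
        (Real.sinh (Real.sqrt (2 * |s|)) + Real.sin (Real.sqrt (2 * |s|))) /
          (2 * Real.sqrt 2 * Real.sqrt |s| * Real.cosh (Real.sqrt (2 * |s|))))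
      ≥ η₀ / (1 + |s| ^ ((1 : ℝ) / 2)) := by
  refine ⟨1/100, by norm_num, fun s => ?_⟩
  have hrp : |s| ^ ((1 : ℝ) / 2) = Real.sqrt |s| := (Real.sqrt_eq_rpow _).symm
  rw [hrp]
  by_cases hs : s = 0
  · simp [hs]; norm_num
  · rw [if_neg hs]
    have hspos : (0:ℝ) < |s| := abs_pos.mpr hs
    set x := Real.sqrt (2 * |s|) with hxdef
    have hxpos : 0 < x := Real.sqrt_pos.mpr (by positivity)
    have hden : Real.sqrt 2 * Real.sqrt |s| = x := by
      rw [hxdef, Real.sqrt_mul (by norm_num : (0:ℝ) ≤ 2)]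
    have hsq : Real.sqrt |s| = x / Real.sqrt 2 := by
      field_simp [← hden]
      linarith [mul_comm (Real.sqrt |s|) (Real.sqrt 2)]
    have h2 : (1:ℝ) ≤ Real.sqrt 2 := by
      nlinarith [Real.sq_sqrt (by norm_num : (0:ℝ) ≤ 2), Real.sqrt_nonneg 2]
    have h2' : Real.sqrt 2 ≤ 2 := by
      nlinarith [Real.sq_sqrt (by norm_num : (0:ℝ) ≤ 2), Real.sqrt_nonneg 2]
    have hsqx : x / 2 ≤ Real.sqrt |s| := by
      rw [hsq]
      apply div_le_div_of_nonneg_left hxpos.le (by linarith) h2'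
    have hsqnn : 0 ≤ Real.sqrt |s| := Real.sqrt_nonneg _
    have hcoshpos : 0 < Real.cosh x := Real.cosh_pos x
    have hdpos : 0 < 2 * Real.sqrt 2 * Real.sqrt |s| * Real.cosh x := by
      rw [mul_assoc 2, hden]; positivity
    have h1pos : (0:ℝ) < 1 + Real.sqrt |s| := by linarith
    rw [ge_iff_le, div_le_div_iff₀ h1pos hdpos, mul_assoc 2, hden]
    -- goal: 1/100 * (2 * x * cosh x) ≤ (sinh x + sin x) * (1 + √|s|)
    have he : (2.7:ℝ) < Real.exp 1 := by
      have := Real.exp_one_gt_d9; linarith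
    have hexpx : 0 < Real.exp (-x) := Real.exp_pos _
    by_cases hx1 : x ≤ 1
    · -- small case
      have hsin : 0 ≤ Real.sin x := by
        apply Real.sin_nonneg_of_nonneg_of_le_pi hxpos.le
        linarith [Real.pi_gt_three]
      have hsinh : x ≤ Real.sinh x := (Real.self_lt_sinh_iff.mpr hxpos).le
      have hcosh3 : Real.cosh x ≤ 3 := by
        have h1 : Real.exp (-x) ≤ Real.exp x := Real.exp_le_exp.mpr (by linarith)
        have h2 : Real.exp x ≤ Real.exp 1 := Real.exp_le_exp.mpr hx1
        have h3 : Real.exp 1 < 2.7182818286 := by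
          have := Real.exp_one_lt_d9; linarith
        rw [Real.cosh_eq]; linarith
      nlinarith [mul_nonneg hsin hsqnn, mul_nonneg (le_trans hxpos.le hsinh) hsqnn,
        mul_le_mul_of_nonneg_left hcosh3 hxpos.le]
    · -- large case
      push_neg at hx1
      have hsin : -1 ≤ Real.sin x := Real.neg_one_le_sin x
      have hexp : Real.exp 1 ≤ Real.exp x := Real.exp_le_exp.mpr hx1.le
      have hexpneg : Real.exp (-x) ≤ Real.exp (-1) := Real.exp_le_exp.mpr (by linarith)
      have hinv : Real.exp (-1) < 1/2.7 := by
        rw [Real.exp_neg]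
        rw [inv_lt_comm₀ (Real.exp_pos 1) (by norm_num)]
        linarith
      have hkey : Real.cosh x ≤ 10 * (Real.sinh x - 1) := by
        rw [Real.cosh_eq, Real.sinh_eq]
        have : (20:ℝ) ≤ 9 * Real.exp x - 11 * Real.exp (-x) := by
          nlinarith
        linarith
      have hnum : Real.cosh x / 10 ≤ Real.sinh x + Real.sin x := by linarith
      have hstep : x / 5 ≤ 1 + Real.sqrt |s| := by linarith
      nlinarith [mul_le_mul hnum hstep (by linarith) (by linarith : (0:ℝ) ≤ Real.sinh x + Real.sin x),
        mul_pos hxpos hcoshpos]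
end

section
/- Let λ ∈ ℂ with Re λ > 0 and let √λ denote the principal square root. Then cosh(√λ) ≠ 0 and Re(tanh(√λ)/√λ) ≥ 0. -/
lemma cosh_decomp16 (s : ℂ) :
    Complex.cosh s = (Real.cosh s.re * Real.cos s.im : ℝ) +
      (Real.sinh s.re * Real.sin s.im : ℝ) * Complex.I := by
  conv_lhs => rw [← Complex.re_add_im s]
  rw [Complex.cosh_add, Complex.cosh_mul_I, Complex.sinh_mul_I,
    ← Complex.ofReal_cosh, ← Complex.ofReal_sinh, ← Complex.ofReal_cos, ← Complex.ofReal_sin]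
  push_cast
  ring

lemma sinh_decomp16 (s : ℂ) :
    Complex.sinh s = (Real.sinh s.re * Real.cos s.im : ℝ) +
      (Real.cosh s.re * Real.sin s.im : ℝ) * Complex.I := by
  conv_lhs => rw [← Complex.re_add_im s]
  rw [Complex.sinh_add, Complex.cosh_mul_I, Complex.sinh_mul_I,
    ← Complex.ofReal_cosh, ← Complex.ofReal_sinh, ← Complex.ofReal_cos, ← Complex.ofReal_sin]
  push_cast
  ring

theorem stmt16 (lam : ℂ) (hlam : 0 < lam.re) :
    Complex.cosh (lam ^ (1/2 : ℂ)) ≠ 0 ∧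
      0 ≤ (Complex.tanh (lam ^ (1/2 : ℂ)) / lam ^ (1/2 : ℂ)).re := by
  have hlam0 : lam ≠ 0 := by
    intro h; rw [h] at hlam; simp at hlam
  set s : ℂ := lam ^ (1/2 : ℂ) with hs
  set x : ℝ := s.re with hxdef
  set y : ℝ := s.im with hydef
  have hsq : s * s = lam := by
    rw [hs, ← Complex.cpow_add _ _ hlam0]
    norm_num
  have hx : 0 < x := by
    have harg : |Complex.arg lam| < Real.pi / 2 :=
      Complex.abs_arg_lt_pi_div_two_iff.mpr (Or.inl hlam)
    have hπ : 0 < Real.pi := Real.pi_pos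
    have hexp : s = Complex.exp (Complex.log lam * (1/2)) := by
      rw [hs, Complex.cpow_def_of_ne_zero hlam0]
    have hre : x = Real.exp ((Complex.log lam * (1/2)).re) *
        Real.cos ((Complex.log lam * (1/2)).im) := by
      rw [hxdef, hexp, Complex.exp_re]
    have him2 : (Complex.log lam * (1/2)).im = Complex.arg lam / 2 := by
      simp [Complex.log_im]
      ring
    rw [hre, him2]
    have hcos : 0 < Real.cos (Complex.arg lam / 2) := by
      apply Real.cos_pos_of_mem_Ioo
      constructor
      · nlinarith [abs_lt.mp harg]
      · nlinarith [abs_lt.mp harg]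
    positivity
  have hxy : y ^ 2 < x ^ 2 := by
    have := congrArg Complex.re hsq
    simp only [Complex.mul_re, ← hxdef, ← hydef] at this
    nlinarith
  have hyx : |y| ≤ x := by
    nlinarith [_root_.sq_abs y, abs_nonneg y, hxy, hx]
  have hcoshx : 0 < Real.cosh x := Real.cosh_pos x
  have hsinhx : 0 < Real.sinh x := Real.sinh_pos_iff.mpr hx
  have hcosh : Complex.cosh s ≠ 0 := by
    intro h
    rw [cosh_decomp16 s, ← hxdef, ← hydef] at h
    have hre := congrArg Complex.re h
    have him := congrArg Complex.im h
    simp [Complex.add_re, Complex.add_im, -Complex.ofReal_cosh, -Complex.ofReal_sinh,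
      -Complex.ofReal_cos, -Complex.ofReal_sin] at hre him
    have hcy : Real.cos y = 0 := by
      rcases hre with h1 | h1
      · exact absurd h1 (ne_of_gt hcoshx)
      · exact h1
    have hsy : Real.sin y ≠ 0 := by
      intro h2
      have := Real.sin_sq_add_cos_sq y
      rw [h2, hcy] at this; norm_num at this
    rcases him with h1 | h1
    · exact ne_of_gt hx h1
    · exact absurd h1 hsy
  refine ⟨hcosh, ?_⟩
  have hrw : Complex.tanh s / s = Complex.sinh s / (Complex.cosh s * s) := by
    rw [Complex.tanh_eq_sinh_div_cosh, div_div]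
  rw [hrw, Complex.div_re]
  have hN : (Complex.sinh s).re = Real.sinh x * Real.cos y ∧
      (Complex.sinh s).im = Real.cosh x * Real.sin y := by
    rw [sinh_decomp16 s, ← hxdef, ← hydef]
    constructor <;>
      simp [-Complex.ofReal_cosh, -Complex.ofReal_sinh, -Complex.ofReal_cos, -Complex.ofReal_sin]
  have hD : (Complex.cosh s * s).re = Real.cosh x * Real.cos y * x - Real.sinh x * Real.sin y * y ∧
      (Complex.cosh s * s).im = Real.cosh x * Real.cos y * y + Real.sinh x * Real.sin y * x := by
    rw [Complex.mul_re, Complex.mul_im, cosh_decomp16 s, ← hxdef, ← hydef]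
    constructor <;>
      simp [-Complex.ofReal_cosh, -Complex.ofReal_sinh, -Complex.ofReal_cos, -Complex.ofReal_sin]
  rw [hN.1, hN.2, hD.1, hD.2, ← add_div]
  apply div_nonneg
  · have hsiny : |Real.sin y| ≤ Real.sinh x :=
      le_trans (Real.abs_sin_le_abs) (le_trans hyx (Real.self_le_sinh_iff.mpr hx.le))
    have hcosy : |Real.cos y| ≤ Real.cosh x :=
      le_trans (Real.abs_cos_le_one y) (Real.one_le_cosh x)
    have h1 : |y * Real.sin y * Real.cos y| ≤ x * Real.sinh x * Real.cosh x := by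
      rw [abs_mul, abs_mul]
      apply mul_le_mul _ hcosy (abs_nonneg _) (by positivity)
      exact mul_le_mul hyx hsiny (abs_nonneg _) hx.le
    have key : 0 ≤ x * Real.sinh x * Real.cosh x + y * Real.sin y * Real.cos y := by
      nlinarith [abs_le.mp h1]
    have hexp2 : Real.sinh x * Real.cos y * (Real.cosh x * Real.cos y * x - Real.sinh x * Real.sin y * y) +
        Real.cosh x * Real.sin y * (Real.cosh x * Real.cos y * y + Real.sinh x * Real.sin y * x) =
        x * Real.sinh x * Real.cosh x + y * Real.sin y * Real.cos y := by
      have p1 := Real.sin_sq_add_cos_sq y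
      have p2 := Real.cosh_sq_sub_sinh_sq x
      linear_combination (x * Real.sinh x * Real.cosh x) * p1 +
        (y * Real.sin y * Real.cos y) * p2
    rw [hexp2]
    exact key
  · exact Complex.normSq_nonneg _
end
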